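/- For all a ≥ 2 and b ≥ 2, the Toads and Frogs position L T^a □ F^b R, where L is any finite sequence over {T,F} ending in F and R is any finite sequence over {T,F} beginning with T, has game value * = {0 | 0}. -/

import Mathlib

universe u

namespace SetTheory

/-- Pre-games (removed from Mathlib; restated with the December 2024 Mathlib meaning). -/
inductive PGame : Type (u + 1)
  | mk : ∀ α β : Type u, (α → PGame) → (β → PGame) → PGame

namespace PGame

/-- Auxiliary for `leLf`: recursion on the second game. -/
def leLfAux {xl xr : Type u} (xL : xl → PGame.{u}) (xR : xr → PGame.{u})
    (IHL : xl → PGame.{u} → Prop × Prop) (IHR : xr → PGame.{u} → Prop × Prop) :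
    PGame.{u} → Prop × Prop
  | mk yl yr yL yR =>
    ((∀ i, (IHL i (mk yl yr yL yR)).2) ∧ ∀ j, (leLfAux xL xR IHL IHR (yR j)).2,
      (∃ i, (leLfAux xL xR IHL IHR (yL i)).1) ∨ ∃ j, (IHR j (mk yl yr yL yR)).1)

/-- The pair (`x ≤ y`, `x ⧏ y`), defined by simultaneous recursion. -/
def leLf : PGame.{u} → PGame.{u} → Prop × Prop
  | mk _ _ xL xR => leLfAux xL xR (fun i => leLf (xL i)) (fun j => leLf (xR j))

instance : LE PGame.{u} := ⟨fun x y => (leLf x y).1⟩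

/-- Equivalence of pre-games: `x ≤ y ∧ y ≤ x`. -/
def Equiv (x y : PGame.{u}) : Prop := x ≤ y ∧ y ≤ x

instance : HasEquiv PGame.{u} := ⟨Equiv⟩

instance : Zero PGame.{u} := ⟨mk PEmpty PEmpty PEmpty.elim PEmpty.elim⟩

/-- Negation of a pre-game. -/
def neg : PGame.{u} → PGame.{u}
  | mk l r L R => mk r l (fun i => neg (R i)) (fun i => neg (L i))

instance : Neg PGame.{u} := ⟨neg⟩

/-- The pre-game `* = {0 | 0}`. -/
def star : PGame.{u} := mk PUnit PUnit (fun _ => 0) (fun _ => 0)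

end PGame

end SetTheory

open SetTheory

inductive Cell : Type
  | T | F | E
deriving DecidableEq

/-- Positions reachable from `l` by a single Toad (Left) move:
a Toad steps right into an empty square, or jumps over one adjacent Frog
into the empty square beyond. -/
def toadMoves : List Cell → List (List Cell)
  | [] => []
  | c :: rest =>
    (match c, rest with
     | Cell.T, Cell.E :: r => [Cell.E :: Cell.T :: r]
     | Cell.T, Cell.F :: Cell.E :: r => [Cell.E :: Cell.F :: Cell.T :: r]
     | _, _ => []) ++ (toadMoves rest).map (c :: ·)

/-- Positions reachable from `l` by a single Frog (Right) move. -/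
def frogMoves : List Cell → List (List Cell)
  | [] => []
  | c :: rest =>
    (match c, rest with
     | Cell.E, Cell.F :: r => [Cell.F :: Cell.E :: r]
     | Cell.E, Cell.T :: Cell.F :: r => [Cell.F :: Cell.T :: Cell.E :: r]
     | _, _ => []) ++ (frogMoves rest).map (c :: ·)

/-- A weight which strictly decreases with every legal move: each Toad
contributes the number of squares strictly to its right, each Frog the number
of squares strictly to its left. -/
def wt : List Cell → ℕ
  | [] => 0
  | c :: rest =>
    (if c = Cell.T then rest.length else 0) + rest.countP (· = Cell.F) + wt rest

/-- Game tree with fuel; since `wt` strictly decreases along moves and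
positions of weight `0` have no moves, `gameAux n l` is the true game
tree of `l` whenever `wt l ≤ n`. -/
def gameAux : ℕ → List Cell → PGame
  | 0, _ => 0
  | n + 1, l =>
    PGame.mk {m // m ∈ toadMoves l} {m // m ∈ frogMoves l}
      (fun m => gameAux n m.1) (fun m => gameAux n m.1)

/-- The game (PGame) associated to a Toads and Frogs position. -/
def tfGame (l : List Cell) : PGame := gameAux (wt l + 1) l

/-- The game `{x | y}` with a single Left option `x` and single Right option `y`. -/
def gmk (x y : PGame) : PGame :=
  PGame.mk PUnit PUnit (fun _ => x) (fun _ => y)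

/-- The canonical game of a natural number. -/
def natGame : ℕ → PGame
  | 0 => 0
  | n + 1 => PGame.mk PUnit PEmpty (fun _ => natGame n) (fun x => x.elim)

/-- The canonical game of an integer. -/
def intGame : ℤ → PGame
  | Int.ofNat n => natGame n
  | Int.negSucc n => -natGame (n + 1)

/-- `(TF)^b` : the block `TF` repeated `b` times. -/
def tfBlock (b : ℕ) : List Cell := (List.replicate b [Cell.T, Cell.F]).flatten

/-!
In a position with a single empty square, Left can only move into the hole from its left
and Right only from its right. If a Toad sits just right of the hole (`X □ T Y`), Right's only
move is the jump `□ T F ↦ F T □`, which Left answers by the slide `F T □ ↦ F □ T`, recreating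
the pattern further right; hence `X □ T Y ≥ 0`, and symmetrically `X F □ Y ≤ 0`. These give
`X T □ F T Y ≥ *` and `X F T □ F Y ≤ *`, and the options of `X T T □ F F Y` are compared with
`0` and `*` through these four facts.
-/

namespace SetTheory.PGame

def LF (x y : PGame.{u}) : Prop := (leLf x y).2

infix:50 " ⧏ " => LF

theorem mk_le_mk {xl xr yl yr : Type u} {xL : xl → PGame} {xR : xr → PGame}
    {yL : yl → PGame} {yR : yr → PGame} :
    mk xl xr xL xR ≤ mk yl yr yL yR ↔
      (∀ i, xL i ⧏ mk yl yr yL yR) ∧ ∀ j, mk xl xr xL xR ⧏ yR j :=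
  Iff.rfl

theorem mk_lf_mk {xl xr yl yr : Type u} {xL : xl → PGame} {xR : xr → PGame}
    {yL : yl → PGame} {yR : yr → PGame} :
    mk xl xr xL xR ⧏ mk yl yr yL yR ↔
      (∃ i, mk xl xr xL xR ≤ yL i) ∨ ∃ j, xR j ≤ mk yl yr yL yR :=
  Iff.rfl

theorem zero_def : (0 : PGame.{u}) = mk PEmpty PEmpty PEmpty.elim PEmpty.elim := rfl

theorem star_def : star.{u} = mk PUnit PUnit (fun _ => 0) (fun _ => 0) := rfl

end SetTheory.PGame

open SetTheory.PGame Cell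

theorem mem_toadMoves {l m : List Cell} :
    m ∈ toadMoves l ↔ ∃ X Y,
      (l = X ++ T :: E :: Y ∧ m = X ++ E :: T :: Y) ∨
      (l = X ++ T :: F :: E :: Y ∧ m = X ++ E :: F :: T :: Y) := by
  constructor
  · induction l generalizing m with
    | nil => simp [toadMoves]
    | cons c r ih =>
      intro h
      simp only [toadMoves, List.mem_append, List.mem_map] at h
      rcases h with h | ⟨m', hm', rfl⟩
      · split at h <;> simp only [List.mem_singleton, List.not_mem_nil] at h
        · exact ⟨[], _, .inl ⟨rfl, h⟩⟩
        · exact ⟨[], _, .inr ⟨rfl, h⟩⟩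
      · obtain ⟨X, Y, h | h⟩ := ih hm'
        · exact ⟨c :: X, Y, .inl (by simp [h])⟩
        · exact ⟨c :: X, Y, .inr (by simp [h])⟩
  · rintro ⟨X, Y, ⟨rfl, rfl⟩ | ⟨rfl, rfl⟩⟩
    all_goals induction X with
      | nil => simp [toadMoves]
      | cons c X ih => exact List.mem_append_right _ (List.mem_map_of_mem ih)

theorem mem_frogMoves {l m : List Cell} :
    m ∈ frogMoves l ↔ ∃ X Y,
      (l = X ++ E :: F :: Y ∧ m = X ++ F :: E :: Y) ∨
      (l = X ++ E :: T :: F :: Y ∧ m = X ++ F :: T :: E :: Y) := by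
  constructor
  · induction l generalizing m with
    | nil => simp [frogMoves]
    | cons c r ih =>
      intro h
      simp only [frogMoves, List.mem_append, List.mem_map] at h
      rcases h with h | ⟨m', hm', rfl⟩
      · split at h <;> simp only [List.mem_singleton, List.not_mem_nil] at h
        · exact ⟨[], _, .inl ⟨rfl, h⟩⟩
        · exact ⟨[], _, .inr ⟨rfl, h⟩⟩
      · obtain ⟨X, Y, h | h⟩ := ih hm'
        · exact ⟨c :: X, Y, .inl (by simp [h])⟩
        · exact ⟨c :: X, Y, .inr (by simp [h])⟩
  · rintro ⟨X, Y, ⟨rfl, rfl⟩ | ⟨rfl, rfl⟩⟩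
    all_goals induction X with
      | nil => simp [frogMoves]
      | cons c X ih => exact List.mem_append_right _ (List.mem_map_of_mem ih)

theorem wt_append (X Y : List Cell) : wt (X ++ Y) =
    wt X + wt Y + X.countP (· = T) * Y.length + Y.countP (· = F) * X.length := by
  induction X with
  | nil => simp [wt]
  | cons c X ih =>
    rw [List.cons_append, wt, wt, ih]
    simp only [List.countP_cons, List.length_append, List.countP_append, List.length_cons]
    cases c <;> simp <;> ring

theorem wt_lt_of_mem_toadMoves {l m : List Cell} (h : m ∈ toadMoves l) : wt m < wt l := by
  obtain ⟨X, Y, ⟨rfl, rfl⟩ | ⟨rfl, rfl⟩⟩ := mem_toadMoves.1 h <;>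
    simp [wt_append, wt] <;> omega

theorem wt_lt_of_mem_frogMoves {l m : List Cell} (h : m ∈ frogMoves l) : wt m < wt l := by
  obtain ⟨X, Y, ⟨rfl, rfl⟩ | ⟨rfl, rfl⟩⟩ := mem_frogMoves.1 h
  · simp [wt_append, wt]
  · simp [wt_append, wt]
    omega

theorem gameAux_eq_gameAux {n k : ℕ} {l : List Cell} (hn : wt l < n) (hk : wt l < k) :
    gameAux n l = gameAux k l := by
  induction n generalizing k l with
  | zero => omega
  | succ n ih =>
    obtain ⟨k, rfl⟩ : ∃ k', k = k' + 1 := ⟨k - 1, by omega⟩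
    rw [gameAux, gameAux]
    have hT : (fun m : {m // m ∈ toadMoves l} => gameAux n m.1) = fun m => gameAux k m.1 := by
      funext m
      have := wt_lt_of_mem_toadMoves m.2
      exact ih (by omega) (by omega)
    have hF : (fun m : {m // m ∈ frogMoves l} => gameAux n m.1) = fun m => gameAux k m.1 := by
      funext m
      have := wt_lt_of_mem_frogMoves m.2
      exact ih (by omega) (by omega)
    rw [hT, hF]

theorem tfGame_eq (l : List Cell) :
    tfGame l = mk {m // m ∈ toadMoves l} {m // m ∈ frogMoves l}
      (fun m => tfGame m.1) (fun m => tfGame m.1) := by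
  have hT : (fun m : {m // m ∈ toadMoves l} => gameAux (wt l) m.1) = fun m => tfGame m.1 :=
    funext fun m => gameAux_eq_gameAux (wt_lt_of_mem_toadMoves m.2) (Nat.lt_succ_self _)
  have hF : (fun m : {m // m ∈ frogMoves l} => gameAux (wt l) m.1) = fun m => tfGame m.1 :=
    funext fun m => gameAux_eq_gameAux (wt_lt_of_mem_frogMoves m.2) (Nat.lt_succ_self _)
  rw [tfGame, gameAux, hT, hF]

theorem zero_le_tfGame {l : List Cell} :
    0 ≤ tfGame l ↔ ∀ m ∈ frogMoves l, ∃ m' ∈ toadMoves m, 0 ≤ tfGame m' := by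
  rw [tfGame_eq, zero_def, mk_le_mk]
  simp only [IsEmpty.forall_iff, true_and, Subtype.forall]
  refine forall₂_congr fun m _ => ?_
  rw [tfGame_eq m, mk_lf_mk]
  simp

theorem tfGame_le_zero {l : List Cell} :
    tfGame l ≤ 0 ↔ ∀ m ∈ toadMoves l, ∃ m' ∈ frogMoves m, tfGame m' ≤ 0 := by
  rw [tfGame_eq, zero_def, mk_le_mk]
  simp only [IsEmpty.forall_iff, and_true, Subtype.forall]
  refine forall₂_congr fun m _ => ?_
  rw [tfGame_eq m, mk_lf_mk]
  simp

theorem star_le_tfGame {l : List Cell} :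
    star ≤ tfGame l ↔ (∃ m ∈ toadMoves l, 0 ≤ tfGame m) ∧
      ∀ m ∈ frogMoves l, 0 ≤ tfGame m ∨ ∃ m' ∈ toadMoves m, star ≤ tfGame m' := by
  rw [tfGame_eq, star_def, mk_le_mk]
  simp only [forall_const, Subtype.forall]
  refine and_congr ?_ (forall₂_congr fun m _ => ?_)
  · rw [zero_def, mk_lf_mk]
    simp
  · rw [tfGame_eq m, mk_lf_mk]
    simp [or_comm]

theorem tfGame_le_star {l : List Cell} :
    tfGame l ≤ star ↔ (∃ m ∈ frogMoves l, tfGame m ≤ 0) ∧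
      ∀ m ∈ toadMoves l, tfGame m ≤ 0 ∨ ∃ m' ∈ frogMoves m, tfGame m' ≤ star := by
  rw [tfGame_eq, star_def, mk_le_mk, and_comm]
  simp only [forall_const, Subtype.forall]
  refine and_congr ?_ (forall₂_congr fun m _ => ?_)
  · rw [zero_def, mk_lf_mk]
    simp
  · rw [tfGame_eq m, mk_lf_mk]
    simp [or_comm]

section Hole

variable {X Y m : List Cell}

theorem mem_toadMoves_append_E (hX : E ∉ X) (hY : E ∉ Y) :
    m ∈ toadMoves (X ++ E :: Y) ↔
      (∃ X', X = X' ++ [T] ∧ m = X' ++ E :: T :: Y) ∨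
      (∃ X', X = X' ++ [T, F] ∧ m = X' ++ E :: F :: T :: Y) := by
  rw [mem_toadMoves]
  constructor
  · rintro ⟨A, B, ⟨h, rfl⟩ | ⟨h, rfl⟩⟩
    · rw [show A ++ T :: E :: B = (A ++ [T]) ++ E :: B by simp,
        List.append_cons_inj_of_notMem hX hY] at h
      obtain ⟨rfl, -, rfl⟩ := h
      exact .inl ⟨A, rfl, rfl⟩
    · rw [show A ++ T :: F :: E :: B = (A ++ [T, F]) ++ E :: B by simp,
        List.append_cons_inj_of_notMem hX hY] at h
      obtain ⟨rfl, -, rfl⟩ := h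
      exact .inr ⟨A, rfl, rfl⟩
  · rintro (⟨A, rfl, rfl⟩ | ⟨A, rfl, rfl⟩)
    · exact ⟨A, Y, .inl ⟨by simp, rfl⟩⟩
    · exact ⟨A, Y, .inr ⟨by simp, rfl⟩⟩

theorem mem_frogMoves_append_E (hX : E ∉ X) (hY : E ∉ Y) :
    m ∈ frogMoves (X ++ E :: Y) ↔
      (∃ Y', Y = F :: Y' ∧ m = X ++ F :: E :: Y') ∨
      (∃ Y', Y = T :: F :: Y' ∧ m = X ++ F :: T :: E :: Y') := by
  rw [mem_frogMoves]
  constructor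
  · rintro ⟨A, B, ⟨h, rfl⟩ | ⟨h, rfl⟩⟩
    · obtain ⟨rfl, -, rfl⟩ := (List.append_cons_inj_of_notMem hX hY).1 h
      exact .inl ⟨B, rfl, rfl⟩
    · obtain ⟨rfl, -, rfl⟩ := (List.append_cons_inj_of_notMem hX hY).1 h
      exact .inr ⟨B, rfl, rfl⟩
  · rintro (⟨B, rfl, rfl⟩ | ⟨B, rfl, rfl⟩)
    · exact ⟨X, B, .inl ⟨rfl, rfl⟩⟩
    · exact ⟨X, B, .inr ⟨rfl, rfl⟩⟩

theorem mem_toadMoves_append_T_E (hX : E ∉ X) (hY : E ∉ Y) :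
    m ∈ toadMoves (X ++ T :: E :: Y) ↔ m = X ++ E :: T :: Y := by
  rw [show X ++ T :: E :: Y = (X ++ [T]) ++ E :: Y by simp,
    mem_toadMoves_append_E (by simpa using hX) hY]
  constructor
  · rintro (⟨X', h, rfl⟩ | ⟨X', h, -⟩)
    · rw [List.append_left_inj _ |>.1 h]
    · simpa using congrArg List.getLast? h
  · rintro rfl
    exact .inl ⟨X, rfl, rfl⟩

theorem mem_toadMoves_append_F_E (hX : E ∉ X) (hY : E ∉ Y) :
    m ∈ toadMoves (X ++ F :: E :: Y) ↔ ∃ X', X = X' ++ [T] ∧ m = X' ++ E :: F :: T :: Y := by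
  rw [show X ++ F :: E :: Y = (X ++ [F]) ++ E :: Y by simp,
    mem_toadMoves_append_E (by simpa using hX) hY]
  constructor
  · rintro (⟨X', h, -⟩ | ⟨X', h, rfl⟩)
    · simpa using congrArg List.getLast? h
    · exact ⟨X', List.append_inj' (s₂ := X' ++ [T]) (by simpa using h) rfl |>.1, rfl⟩
  · rintro ⟨X', rfl, rfl⟩
    exact .inr ⟨X', by simp, rfl⟩

theorem mem_frogMoves_append_E_F (hX : E ∉ X) (hY : E ∉ Y) :
    m ∈ frogMoves (X ++ E :: F :: Y) ↔ m = X ++ F :: E :: Y := by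
  simp [mem_frogMoves_append_E hX (show E ∉ F :: Y by simpa using hY)]

theorem mem_frogMoves_append_E_T (hX : E ∉ X) (hY : E ∉ Y) :
    m ∈ frogMoves (X ++ E :: T :: Y) ↔ ∃ Y', Y = F :: Y' ∧ m = X ++ F :: T :: E :: Y' := by
  simp [mem_frogMoves_append_E hX (show E ∉ T :: Y by simpa using hY)]

theorem zero_le_tfGame_append_E_T {X Y : List Cell} (hX : E ∉ X) (hY : E ∉ Y) :
    0 ≤ tfGame (X ++ E :: T :: Y) := by
  refine zero_le_tfGame.2 fun m hm => ?_
  obtain ⟨Y', rfl, rfl⟩ := (mem_frogMoves_append_E_T hX hY).1 hm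
  exact ⟨(X ++ [F]) ++ E :: T :: Y', mem_toadMoves.2 ⟨X ++ [F], Y', .inl ⟨by simp, rfl⟩⟩,
    zero_le_tfGame_append_E_T (by simpa using hX) (by simp_all)⟩
termination_by Y.length

theorem tfGame_append_F_E_le_zero {X Y : List Cell} (hX : E ∉ X) (hY : E ∉ Y) :
    tfGame (X ++ F :: E :: Y) ≤ 0 := by
  refine tfGame_le_zero.2 fun m hm => ?_
  obtain ⟨X', rfl, rfl⟩ := (mem_toadMoves_append_F_E hX hY).1 hm
  exact ⟨X' ++ F :: E :: T :: Y, mem_frogMoves.2 ⟨X', T :: Y, .inl ⟨rfl, rfl⟩⟩,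
    tfGame_append_F_E_le_zero (by simp_all) (by simpa using hY)⟩
termination_by X.length

theorem star_le_tfGame_append_T_E_F_T (hX : E ∉ X) (hY : E ∉ Y) :
    star ≤ tfGame (X ++ T :: E :: F :: T :: Y) := by
  refine star_le_tfGame.2 ⟨⟨X ++ E :: T :: F :: T :: Y, mem_toadMoves.2 ⟨X, _, .inl ⟨rfl, rfl⟩⟩,
    zero_le_tfGame_append_E_T hX (by simpa using hY)⟩, fun m hm => .inl ?_⟩
  rw [show X ++ T :: E :: F :: T :: Y = (X ++ [T]) ++ E :: F :: T :: Y by simp,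
    mem_frogMoves_append_E_F (by simpa using hX) (by simpa using hY)] at hm
  simpa [hm] using zero_le_tfGame_append_E_T (X := X ++ [T, F]) (by simpa using hX) hY

theorem tfGame_append_F_T_E_F_le_star (hX : E ∉ X) (hY : E ∉ Y) :
    tfGame (X ++ F :: T :: E :: F :: Y) ≤ star := by
  refine tfGame_le_star.2 ⟨⟨X ++ F :: T :: F :: E :: Y,
    mem_frogMoves.2 ⟨X ++ [F, T], Y, .inl ⟨by simp, by simp⟩⟩,
    by simpa using tfGame_append_F_E_le_zero (X := X ++ [F, T]) (by simpa using hX) hY⟩,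
    fun m hm => .inl ?_⟩
  rw [show X ++ F :: T :: E :: F :: Y = (X ++ [F]) ++ T :: E :: F :: Y by simp,
    mem_toadMoves_append_T_E (by simpa using hX) (by simpa using hY)] at hm
  simpa [hm] using tfGame_append_F_E_le_zero hX (Y := T :: F :: Y) (by simpa using hY)

theorem tfGame_append_T_T_E_F_F_equiv_star (hX : E ∉ X) (hY : E ∉ Y) :
    tfGame (X ++ T :: T :: E :: F :: F :: Y) ≈ star := by
  have hXT : E ∉ X ++ [T] := by simpa using hX
  have hXTT : E ∉ X ++ [T, T] := by simpa using hX
  have hFY : E ∉ F :: Y := by simpa using hY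
  refine ⟨tfGame_le_star.2 ⟨?_, fun m hm => .inr ?_⟩, star_le_tfGame.2 ⟨?_, fun m hm => .inr ?_⟩⟩
  · refine ⟨X ++ T :: T :: F :: E :: F :: Y,
      mem_frogMoves.2 ⟨X ++ [T, T], F :: Y, .inl ⟨by simp, by simp⟩⟩, ?_⟩
    simpa using tfGame_append_F_E_le_zero hXTT hFY
  · rw [show X ++ T :: T :: E :: F :: F :: Y = (X ++ [T]) ++ T :: E :: F :: F :: Y by simp,
      mem_toadMoves_append_T_E hXT (by simpa using hY)] at hm
    subst hm
    refine ⟨X ++ T :: F :: T :: E :: F :: Y,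
      mem_frogMoves.2 ⟨X ++ [T], F :: Y, .inr ⟨by simp, by simp⟩⟩, ?_⟩
    simpa using tfGame_append_F_T_E_F_le_star hXT hY
  · refine ⟨X ++ T :: E :: T :: F :: F :: Y,
      mem_toadMoves.2 ⟨X ++ [T], F :: F :: Y, .inl ⟨by simp, by simp⟩⟩, ?_⟩
    simpa using zero_le_tfGame_append_E_T (Y := F :: F :: Y) hXT (by simpa using hY)
  · rw [show X ++ T :: T :: E :: F :: F :: Y = (X ++ [T, T]) ++ E :: F :: F :: Y by simp,
      mem_frogMoves_append_E_F hXTT hFY] at hm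
    subst hm
    exact ⟨X ++ T :: E :: F :: T :: F :: Y,
      mem_toadMoves.2 ⟨X ++ [T], F :: Y, .inr ⟨by simp, by simp⟩⟩,
      star_le_tfGame_append_T_E_F_T hX hFY⟩

end Hole

theorem LTaboxFbR_eq_star_general (a b : ℕ) (ha : 2 ≤ a) (hb : 2 ≤ b)
    (L R : List Cell)
    (hLE : Cell.E ∉ L) (hRE : Cell.E ∉ R) :
    tfGame (L ++ List.replicate a Cell.T ++ [Cell.E] ++
      List.replicate b Cell.F ++ R) ≈ PGame.star := by
  obtain ⟨a, rfl⟩ := Nat.exists_eq_add_of_le' ha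
  obtain ⟨b, rfl⟩ := Nat.exists_eq_add_of_le hb
  have hPos : L ++ List.replicate (a + 2) T ++ [E] ++ List.replicate (2 + b) F ++ R =
      (L ++ List.replicate a T) ++ T :: T :: E :: F :: F :: (List.replicate b F ++ R) := by
    simp [List.replicate_add]
  rw [hPos]
  exact tfGame_append_T_T_E_F_F_equiv_star (by simp [hLE]) (by simp [hRE])

/-- `L T^a □ F^b R = *` for `a, b ≥ 2`, `L` a `{T,F}`-string ending in `F`,
`R` a `{T,F}`-string beginning with `T`. -/
theorem LTaboxFbR_eq_star (a b : ℕ) (ha : 2 ≤ a) (hb : 2 ≤ b)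
    (L R : List Cell)
    (hLE : Cell.E ∉ L) (hRE : Cell.E ∉ R)
    (hL : L.getLast? = some Cell.F) (hR : R.head? = some Cell.T) :
    tfGame (L ++ List.replicate a Cell.T ++ [Cell.E] ++
      List.replicate b Cell.F ++ R) ≈ PGame.star :=
  LTaboxFbR_eq_star_general a b ha hb L R hLE hRE
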